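/- arXiv:1910.00670 — 5 statements merged into one kernel-verified Lean document; each statement's English description precedes it below -/
import Mathlib

section
/- Let Γ be a finite connected simple graph with vertex set {1,…,n} and let t, t' be disjoint tubes of Γ that are not linked (i.e., t and t' are far apart). Then sgn^Γ(σ_t) · sgn^{Γ_t^*}(σ_{t'}) = sgn^Γ(σ_{t'}) · sgn^{Γ_{t'}^*}(σ_t), where in the factors sgn^{Γ_t^*}(σ_{t'}) and sgn^{Γ_{t'}^*}(σ_t) the vertex sets of the reconnected complements are relabeled order-preservingly by initial segments {1,…,n−|t|} and {1,…,n−|t'|} respectively, and t' (resp. t) is viewed as a tube of the relabeled graph. -/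
/-!
In one-line notation `σ_s` lists `s` in increasing order and then the rest in increasing order,
so its `Γ`-inversions are exactly the edges `{a, b}` with `a ∈ s`, `b ∉ s` and `b < a`; an
order-preserving relabelling does not change this count. When `t` and `t'` are far apart, no
edge joins them, and reconnecting along `t` creates no edge at a vertex of `t'`. Hence both
sides equal `(-1)` raised to the number of such edges from `t` or from `t'` to the vertices outside
`t ∪ t'`.
-/

open scoped Classical
open TensorProduct

noncomputable section

/-- A finite simple graph whose vertices are a finite set of (totally ordered) naturals. -/
structure FinGraph : Type where
  verts : Finset ℕ
  Adj : ℕ → ℕ → Prop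
  symm : ∀ v w, Adj v w → Adj w v
  loopless : ∀ v, ¬ Adj v v
  support : ∀ v w, Adj v w → v ∈ verts ∧ w ∈ verts

namespace CDTub

/-- Connectivity of a vertex set within a graph: any two of its vertices are joined by a
walk staying inside the set. -/
def VConn (G : FinGraph) (s : Finset ℕ) : Prop :=
  ∀ v ∈ s, ∀ w ∈ s, Relation.ReflTransGen (fun a b => a ∈ s ∧ b ∈ s ∧ G.Adj a b) v w

/-- A tube: a nonempty set of vertices inducing a connected subgraph. -/
def IsTube (G : FinGraph) (t : Finset ℕ) : Prop :=
  t.Nonempty ∧ t ⊆ G.verts ∧ VConn G t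

/-- A connected (nonempty) graph: the universal tube is a tube. -/
def IsConnGraph (G : FinGraph) : Prop := IsTube G G.verts

/-- Two vertex sets are far apart: disjoint and with no edge between them. -/
def FarApart (G : FinGraph) (a b : Finset ℕ) : Prop :=
  Disjoint a b ∧ ¬ ∃ v ∈ a, ∃ w ∈ b, G.Adj v w

/-- Compatible tubes: nested or far apart. -/
def Compatible (G : FinGraph) (a b : Finset ℕ) : Prop :=
  a ⊆ b ∨ b ⊆ a ∨ FarApart G a b

/-- Linked tubes: disjoint and joined by an edge. -/
def Linked (G : FinGraph) (a b : Finset ℕ) : Prop :=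
  Disjoint a b ∧ ∃ v ∈ a, ∃ w ∈ b, G.Adj v w

/-- A tubing of a connected graph: pairwise compatible tubes containing the universal tube. -/
def IsTubing (G : FinGraph) (T : Finset (Finset ℕ)) : Prop :=
  G.verts ∈ T ∧ (∀ t ∈ T, IsTube G t) ∧
    ∀ t ∈ T, ∀ t' ∈ T, t ≠ t' → Compatible G t t'

/-- Induced subgraph on a set of vertices. -/
def induce (G : FinGraph) (t : Finset ℕ) : FinGraph where
  verts := t
  Adj v w := v ∈ t ∧ w ∈ t ∧ G.Adj v w
  symm := fun v w h => ⟨h.2.1, h.1, G.symm v w h.2.2⟩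
  loopless := fun v h => G.loopless v h.2.2
  support := fun _ _ h => ⟨h.1, h.2.1⟩

/-- Simultaneous reconnected complement with respect to a family `F` of tubes
(for a single tube, or a family of pairwise far apart tubes, this is the (iterated)
reconnected complement). -/
def reconnAll (G : FinGraph) (F : Finset (Finset ℕ)) : FinGraph where
  verts := G.verts \ F.biUnion id
  Adj v w := v ≠ w ∧ v ∈ G.verts \ F.biUnion id ∧ w ∈ G.verts \ F.biUnion id ∧
    (G.Adj v w ∨ ∃ f ∈ F, (∃ u ∈ f, G.Adj v u) ∧ ∃ u' ∈ f, G.Adj w u')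
  symm := by
    rintro v w ⟨hne, hv, hw, h⟩
    refine ⟨hne.symm, hw, hv, ?_⟩
    rcases h with h | ⟨f, hf, h1, h2⟩
    · exact Or.inl (G.symm _ _ h)
    · exact Or.inr ⟨f, hf, h2, h1⟩
  loopless := fun v h => h.1 rfl
  support := fun _ _ h => ⟨h.2.1, h.2.2.1⟩

/-- Reconnected complement `Γ_t^*` of a graph with respect to a tube. -/
def reconn (G : FinGraph) (t : Finset ℕ) : FinGraph := reconnAll G {t}

/-- The proper tubes of a tubing. -/
def properTubes (G : FinGraph) (T : Finset (Finset ℕ)) : Finset (Finset ℕ) :=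
  T.filter (fun s => s ≠ G.verts)

/-- The maximal proper tubes of a tubing. -/
def MaxtP (G : FinGraph) (T : Finset (Finset ℕ)) : Finset (Finset ℕ) :=
  (properTubes G T).filter (fun s => ∀ s' ∈ properTubes G T, s ⊆ s' → s = s')

/-- The iterated reconnected complement `Γ_T^*` with respect to the maximal proper tubes. -/
def gammaStar (G : FinGraph) (T : Finset (Finset ℕ)) : FinGraph :=
  reconnAll G (MaxtP G T)

/-- Restriction `T|_t` of a tubing to a tube. -/
def restrictT (T : Finset (Finset ℕ)) (t : Finset ℕ) : Finset (Finset ℕ) :=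
  T.filter (fun s => s ⊆ t)

/-- For a tube `s` of `Γ_T^*`, the tube `s̃` of `Γ`: the union of `s` with all maximal
proper tubes of `T` linked to `s`. -/
def tildeT (G : FinGraph) (T : Finset (Finset ℕ)) (s : Finset ℕ) : Finset ℕ :=
  s ∪ ((MaxtP G T).filter (fun m => Linked G m s)).biUnion id

/-- Substitution `T •_Γ S` of a tubing `S` of `Γ_T^*` into the tubing `T`. -/
def substT (G : FinGraph) (T S : Finset (Finset ℕ)) : Finset (Finset ℕ) :=
  T ∪ S.image (tildeT G T)

/-- The `t`-substitution `γ_t(T;S) = T ∪ (T|_t •_{Γ_t} S)`. -/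
def gammaSub (G : FinGraph) (T : Finset (Finset ℕ)) (t : Finset ℕ)
    (S : Finset (Finset ℕ)) : Finset (Finset ℕ) :=
  T ∪ substT (induce G t) (restrictT T t) S

/-- The tubing `T_t^*` induced on the reconnected complement `Γ_t^*`. -/
def indStar (T : Finset (Finset ℕ)) (t : Finset ℕ) : Finset (Finset ℕ) :=
  T.filter (fun s => Disjoint s t) ∪ (T.filter (fun s => t ⊂ s)).image (fun s => s \ t)

/-- The operation `T ◇ S` of Definition 2.4(2). -/
def diamond (G : FinGraph) (T : Finset (Finset ℕ)) (t : Finset ℕ)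
    (S : Finset (Finset ℕ)) : Finset (Finset ℕ) :=
  T ∪ S.filter (fun s => ¬ Linked G s t) ∪
    (S.filter (fun s => Linked G s t)).image (fun s => s ∪ t)

/-- The tubes of `T`, viewed as subsets of the subtype of vertices. -/
def tubeSets (G : FinGraph) (T : Finset (Finset ℕ)) : Set (Set {x // x ∈ G.verts}) :=
  {U | ∃ t ∈ T, U = {x : {x // x ∈ G.verts} | (x : ℕ) ∈ t}}

/-- The topology on the vertex set generated by the tubes of `T`. -/
def tubingTop (G : FinGraph) (T : Finset (Finset ℕ)) :
    TopologicalSpace {x // x ∈ G.verts} :=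
  TopologicalSpace.generateFrom (tubeSets G T)

/-- One-line notation of the permutation `σ_t`: the vertices of `t` in increasing order
followed by the remaining vertices in increasing order. -/
def sigmaList (X t : Finset ℕ) : List ℕ :=
  t.sort (· ≤ ·) ++ (X \ t).sort (· ≤ ·)

/-- Number of `Γ`-inversions of a permutation given by its one-line notation `l`:
pairs of positions `p < q` carrying values `a > b` which form an edge of `Γ`. -/
def invCount (G : FinGraph) (l : List ℕ) : ℕ :=
  ((Finset.range l.length ×ˢ Finset.range l.length).filter
    (fun pq => pq.1 < pq.2 ∧ l.getD pq.2 0 < l.getD pq.1 0 ∧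
      G.Adj (l.getD pq.1 0) (l.getD pq.2 0))).card

/-- The signature `sgn^Γ(σ) = (-1)^{inv_Γ(σ)}`. -/
def graphSgn (G : FinGraph) (l : List ℕ) : ℤ := (-1) ^ invCount G l

/-- Rank (1-based) of `v` inside a finite set `X` of naturals: the order-preserving
relabelling of `X` by `{1,…,|X|}`. -/
def rk (X : Finset ℕ) (v : ℕ) : ℕ := (X.filter (fun u => u ≤ v)).card

/-- Order-preserving relabelling of a graph by the initial segment `{1,…,n}`. -/
def relabelG (G : FinGraph) : FinGraph where
  verts := G.verts.image (rk G.verts)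
  Adj i j := i ≠ j ∧ ∃ v w, G.Adj v w ∧ i = rk G.verts v ∧ j = rk G.verts w
  symm := by
    rintro i j ⟨hne, v, w, h, hi, hj⟩
    exact ⟨hne.symm, w, v, G.symm _ _ h, hj, hi⟩
  loopless := fun _ h => h.1 rfl
  support := by
    rintro i j ⟨hne, v, w, h, hi, hj⟩
    exact ⟨Finset.mem_image.mpr ⟨v, (G.support _ _ h).1, hi.symm⟩,
      Finset.mem_image.mpr ⟨w, (G.support _ _ h).2, hj.symm⟩⟩

/-- Order-preserving relabelling of a subset of `X`. -/
def relabelF (X t : Finset ℕ) : Finset ℕ := t.image (rk X)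

/-- Order-preserving relabelling of a family of subsets of `X`. -/
def relabelT (X : Finset ℕ) (T : Finset (Finset ℕ)) : Finset (Finset ℕ) :=
  T.image (relabelF X)

/-- Connected components (in `G`) of a set of vertices. -/
def comps (G : FinGraph) (s : Finset ℕ) : Finset (Finset ℕ) :=
  s.image (fun v => s.filter (fun w =>
    Relation.ReflTransGen (fun a b => a ∈ s ∧ b ∈ s ∧ G.Adj a b) v w))

/-- The restriction map `res_Ω^Γ` on tubings: replace each tube by its connected
components in `Ω`. -/
def resT (Om : FinGraph) (T : Finset (Finset ℕ)) : Finset (Finset ℕ) :=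
  T.biUnion (comps Om)

/-- Shift of a vertex set by `n`. -/
def shiftF (n : ℕ) (s : Finset ℕ) : Finset ℕ := s.image (fun v => v + n)

/-- Shift of a family of vertex sets by `n`. -/
def shiftT (n : ℕ) (S : Finset (Finset ℕ)) : Finset (Finset ℕ) := S.image (shiftF n)

/-- Shift of a graph by `n`. -/
def shiftG (n : ℕ) (G : FinGraph) : FinGraph where
  verts := shiftF n G.verts
  Adj v w := ∃ a b, G.Adj a b ∧ v = a + n ∧ w = b + n
  symm := by
    rintro v w ⟨a, b, h, rfl, rfl⟩
    exact ⟨b, a, G.symm _ _ h, rfl, rfl⟩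
  loopless := by
    rintro v ⟨a, b, h, ha, hb⟩
    have : a = b := by omega
    exact G.loopless b (this ▸ h)
  support := by
    rintro v w ⟨a, b, h, rfl, rfl⟩
    exact ⟨Finset.mem_image.mpr ⟨a, (G.support _ _ h).1, rfl⟩,
      Finset.mem_image.mpr ⟨b, (G.support _ _ h).2, rfl⟩⟩

/-- `X_T` : the vertices belonging to no proper tube of `T`. -/
def freeVerts (G : FinGraph) (T : Finset (Finset ℕ)) : Finset ℕ :=
  G.verts.filter (fun v => ∀ s ∈ T, s ≠ G.verts → v ∉ s)

/-- The endpoint `max X_T` of the joining edge. -/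
def joinA (G : FinGraph) (T : Finset (Finset ℕ)) : ℕ :=
  WithBot.unbotD 0 (freeVerts G T).max

/-- The endpoint `n + min X_S` of the joining edge. -/
def joinB (Om : FinGraph) (S : Finset (Finset ℕ)) (n : ℕ) : ℕ :=
  n + WithTop.untopD 0 (freeVerts Om S).min

/-- Vertex set of the joined graph `Γ ∪_{T,S} Ω`. -/
def joinVerts (G Om : FinGraph) (n : ℕ) : Finset ℕ := G.verts ∪ shiftF n Om.verts

/-- The joined graph `Γ ∪_{T,S} Ω`: the disjoint union (with `Ω` shifted by `n`)
plus one edge from `max X_T` to `n + min X_S`. -/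
def joinG (G Om : FinGraph) (T S : Finset (Finset ℕ)) (n : ℕ) : FinGraph where
  verts := joinVerts G Om n
  Adj v w := G.Adj v w ∨ (shiftG n Om).Adj v w ∨
    (v ≠ w ∧ v ∈ joinVerts G Om n ∧ w ∈ joinVerts G Om n ∧
      ((v = joinA G T ∧ w = joinB Om S n) ∨ (w = joinA G T ∧ v = joinB Om S n)))
  symm := by
    rintro v w (h | h | ⟨hne, hv, hw, hc⟩)
    · exact Or.inl (G.symm _ _ h)
    · exact Or.inr (Or.inl ((shiftG n Om).symm _ _ h))
    · exact Or.inr (Or.inr ⟨hne.symm, hw, hv, hc.symm⟩)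
  loopless := by
    rintro v (h | h | ⟨hne, _⟩)
    · exact G.loopless v h
    · exact (shiftG n Om).loopless v h
    · exact hne rfl
  support := by
    rintro v w (h | h | ⟨_, hv, hw, _⟩)
    · exact ⟨Finset.mem_union_left _ (G.support _ _ h).1,
        Finset.mem_union_left _ (G.support _ _ h).2⟩
    · exact ⟨Finset.mem_union_right _ ((shiftG n Om).support _ _ h).1,
        Finset.mem_union_right _ ((shiftG n Om).support _ _ h).2⟩
    · exact ⟨hv, hw⟩

/-- `T ▷ S`. -/
def trR (G Om : FinGraph) (T S : Finset (Finset ℕ)) (n : ℕ) : Finset (Finset ℕ) :=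
  T ∪ shiftT n (properTubes Om S) ∪ {joinVerts G Om n}

/-- `T ◁ S`. -/
def trL (G Om : FinGraph) (T S : Finset (Finset ℕ)) (n : ℕ) : Finset (Finset ℕ) :=
  properTubes G T ∪ shiftT n S ∪ {joinVerts G Om n}

/-- `T ⊥ S`. -/
def tPerp (G Om : FinGraph) (T S : Finset (Finset ℕ)) (n : ℕ) : Finset (Finset ℕ) :=
  properTubes G T ∪ shiftT n (properTubes Om S) ∪ {joinVerts G Om n}

/-- Equality of graphs: same vertex set and same edges. -/
def GEq (A B : FinGraph) : Prop :=
  A.verts = B.verts ∧ ∀ v w, A.Adj v w ↔ B.Adj v w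

/-- Index type for the basis of `Tub⁺`: `none` is the unit `1`, `some (Γ,T)` is a pair. -/
abbrev TubIdx : Type := Option (FinGraph × Finset (Finset ℕ))

/-- A pair `(Γ,T)` relabelled order-preservingly to standard vertex set, identified
with the unit `1` when the vertex set is empty. -/
def embPair (G : FinGraph) (T : Finset (Finset ℕ)) : TubIdx :=
  if G.verts = ∅ then none else some (relabelG G, relabelT G.verts T)

/-- The value of the pre-Lie coproduct `Δ_•` on a basis element. -/
def deltaFun (K : Type) [CommRing K] (i : TubIdx) :
    (TubIdx →₀ K) ⊗[K] (TubIdx →₀ K) :=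
  match i with
  | none => Finsupp.single (none : TubIdx) (1 : K) ⊗ₜ[K] Finsupp.single (none : TubIdx) (1 : K)
  | some (G, T) =>
      (∑ t ∈ T, (Finsupp.single (embPair (induce G t) (restrictT T t)) (1 : K)) ⊗ₜ[K]
        (Finsupp.single (embPair (reconn G t) (indStar T t)) (1 : K)))
      + (Finsupp.single (none : TubIdx) (1 : K)) ⊗ₜ[K]
          (Finsupp.single (some (G, T) : TubIdx) (1 : K))

/-- The pre-Lie coproduct `Δ_•` on `Tub⁺`, the free module on `TubIdx`. -/
def delta (K : Type) [CommRing K] :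
    (TubIdx →₀ K) →ₗ[K] (TubIdx →₀ K) ⊗[K] (TubIdx →₀ K) :=
  Finsupp.lift ((TubIdx →₀ K) ⊗[K] (TubIdx →₀ K)) K TubIdx (deltaFun K)

end CDTub

theorem List.SortedLT.idxOf_lt_idxOf_iff {α : Type*} [Preorder α] [DecidableEq α] {l : List α}
    (hl : l.SortedLT) {a b : α} (ha : a ∈ l) (hb : b ∈ l) :
    l.idxOf a < l.idxOf b ↔ a < b :=
  (hl.getIso l).symm.lt_iff_lt (x := ⟨a, ha⟩) (y := ⟨b, hb⟩)

namespace CDTub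

def crossInvCount (G : FinGraph) (A B : Finset ℕ) : ℕ :=
  ((A ×ˢ B).filter fun p => p.2 < p.1 ∧ G.Adj p.1 p.2).card

theorem invCount_eq_card_of_nodup (G : FinGraph) {l : List ℕ} (hl : l.Nodup) :
    invCount G l = ((l.toFinset ×ˢ l.toFinset).filter fun p =>
      l.idxOf p.1 < l.idxOf p.2 ∧ p.2 < p.1 ∧ G.Adj p.1 p.2).card := by
  have getD_idxOf {a : ℕ} (ha : a ∈ l) : l.getD (l.idxOf a) 0 = a := by
    rw [List.getD_eq_getElem _ _ (List.idxOf_lt_length_iff.2 ha), List.getElem_idxOf]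
  have idxOf_getD {p : ℕ} (hp : p < l.length) : l.idxOf (l.getD p 0) = p := by
    rw [List.getD_eq_getElem _ _ hp, hl.idxOf_getElem]
  unfold invCount
  apply Finset.card_bij' (fun pq _ => (l.getD pq.1 0, l.getD pq.2 0))
    (fun ab _ => (l.idxOf ab.1, l.idxOf ab.2))
  · rintro ⟨p, q⟩ h
    simp only [Finset.mem_filter, Finset.mem_product, Finset.mem_range] at h
    obtain ⟨⟨hp, hq⟩, hpq, h⟩ := h
    simp only [Finset.mem_filter, Finset.mem_product, List.mem_toFinset,
      List.getD_eq_getElem _ _ hp, List.getD_eq_getElem _ _ hq, hl.idxOf_getElem] at h ⊢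
    exact ⟨⟨List.getElem_mem _, List.getElem_mem _⟩, hpq, h⟩
  · rintro ⟨a, b⟩ h
    simp only [Finset.mem_filter, Finset.mem_product, List.mem_toFinset] at h
    obtain ⟨⟨ha, hb⟩, h⟩ := h
    simp only [Finset.mem_filter, Finset.mem_product, Finset.mem_range, getD_idxOf ha,
      getD_idxOf hb, List.idxOf_lt_length_iff]
    exact ⟨⟨ha, hb⟩, h⟩
  · rintro ⟨p, q⟩ h
    simp only [Finset.mem_filter, Finset.mem_product, Finset.mem_range] at h
    simp only [idxOf_getD h.1.1, idxOf_getD h.1.2]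
  · rintro ⟨a, b⟩ h
    simp only [Finset.mem_filter, Finset.mem_product, List.mem_toFinset] at h
    simp only [getD_idxOf h.1.1, getD_idxOf h.1.2]

theorem mem_sigmaList {X s : Finset ℕ} {a : ℕ} : a ∈ sigmaList X s ↔ a ∈ s ∨ a ∈ X \ s := by
  simp only [sigmaList, List.mem_append, Finset.mem_sort]

theorem nodup_sigmaList (X s : Finset ℕ) : (sigmaList X s).Nodup :=
  (s.sort_nodup _).append ((X \ s).sort_nodup _) fun _ ha hb =>
    (Finset.mem_sdiff.1 ((Finset.mem_sort _).1 hb)).2 ((Finset.mem_sort _).1 ha)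

theorem idxOf_sigmaList_lt_and_lt_iff {X s : Finset ℕ} {a b : ℕ} (ha : a ∈ sigmaList X s)
    (hb : b ∈ sigmaList X s) :
    (sigmaList X s).idxOf a < (sigmaList X s).idxOf b ∧ b < a ↔ a ∈ s ∧ b ∉ s ∧ b < a := by
  have idxOf_of_mem {c : ℕ} (hc : c ∈ s) :
      (sigmaList X s).idxOf c = (s.sort (· ≤ ·)).idxOf c ∧
        (s.sort (· ≤ ·)).idxOf c < (s.sort (· ≤ ·)).length := by
    have hc' : c ∈ s.sort (· ≤ ·) := (Finset.mem_sort _).2 hc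
    exact ⟨List.idxOf_append_of_mem hc', List.idxOf_lt_length_iff.2 hc'⟩
  have idxOf_of_notMem {c : ℕ} (hc : c ∉ s) :
      (sigmaList X s).idxOf c = (s.sort (· ≤ ·)).length + ((X \ s).sort (· ≤ ·)).idxOf c :=
    List.idxOf_append_of_notMem (mt (Finset.mem_sort _).1 hc)
  have mem_compl {c : ℕ} (hcl : c ∈ sigmaList X s) (hc : c ∉ s) : c ∈ (X \ s).sort (· ≤ ·) :=
    (Finset.mem_sort _).2 ((mem_sigmaList.1 hcl).resolve_left hc)
  by_cases has : a ∈ s <;> by_cases hbs : b ∈ s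
  · have := (s.sortedLT_sort).idxOf_lt_idxOf_iff ((Finset.mem_sort _).2 has)
      ((Finset.mem_sort _).2 hbs)
    rw [(idxOf_of_mem has).1, (idxOf_of_mem hbs).1]
    simp only [hbs, not_true_eq_false, false_and, and_false, iff_false]
    omega
  · have := idxOf_of_mem has
    have := idxOf_of_notMem hbs
    simp only [has, hbs, not_false_eq_true, true_and, and_iff_right_iff_imp]
    omega
  · have := idxOf_of_mem hbs
    have := idxOf_of_notMem has
    simp only [has, hbs, false_and, iff_false, not_and]
    omega
  · have := ((X \ s).sortedLT_sort).idxOf_lt_idxOf_iff (mem_compl ha has) (mem_compl hb hbs)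
    rw [idxOf_of_notMem has, idxOf_of_notMem hbs]
    simp only [has, false_and, iff_false, not_and]
    omega

theorem invCount_sigmaList (G : FinGraph) (X s : Finset ℕ) :
    invCount G (sigmaList X s) = crossInvCount G s (X \ s) := by
  rw [invCount_eq_card_of_nodup G (nodup_sigmaList X s), crossInvCount]
  congr 1
  ext ⟨a, b⟩
  simp only [Finset.mem_filter, Finset.mem_product, List.mem_toFinset]
  constructor
  · rintro ⟨⟨ha, hb⟩, hlt, h⟩
    obtain ⟨has, hbs, hba⟩ := (idxOf_sigmaList_lt_and_lt_iff ha hb).1 ⟨hlt, h.1⟩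
    exact ⟨⟨has, (mem_sigmaList.1 hb).resolve_left hbs⟩, hba, h.2⟩
  · rintro ⟨⟨has, hbX⟩, hba, h⟩
    have ha : a ∈ sigmaList X s := mem_sigmaList.2 (Or.inl has)
    have hb : b ∈ sigmaList X s := mem_sigmaList.2 (Or.inr hbX)
    obtain ⟨hlt, -⟩ := (idxOf_sigmaList_lt_and_lt_iff ha hb).2 ⟨has, (Finset.mem_sdiff.1 hbX).2, hba⟩
    exact ⟨⟨ha, hb⟩, hlt, hba, h⟩

theorem rk_strictMonoOn (X : Finset ℕ) : StrictMonoOn (rk X) X := by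
  intro v _ w hw hvw
  refine Finset.card_lt_card ⟨Finset.monotone_filter_right _ fun _ _ hu => hu.trans hvw.le, ?_⟩
  intro hsub
  have := (Finset.mem_filter.1 (hsub (Finset.mem_filter.2 ⟨hw, le_rfl⟩))).2
  omega

theorem relabelG_adj_rk_iff (H : FinGraph) {a b : ℕ} (ha : a ∈ H.verts) (hb : b ∈ H.verts) :
    (relabelG H).Adj (rk H.verts a) (rk H.verts b) ↔ H.Adj a b := by
  have hinj := (rk_strictMonoOn H.verts).injOn
  constructor
  · rintro ⟨-, v, w, hvw, hv, hw⟩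
    rwa [hinj ha (H.support _ _ hvw).1 hv, hinj hb (H.support _ _ hvw).2 hw]
  · intro hab
    exact ⟨fun h => H.loopless a (hinj ha hb h ▸ hab), a, b, hab, rfl, rfl⟩

theorem crossInvCount_image {G G' : FinGraph} {X A B : Finset ℕ} {f : ℕ → ℕ}
    (hf : StrictMonoOn f X) (hA : A ⊆ X) (hB : B ⊆ X)
    (hadj : ∀ a ∈ X, ∀ b ∈ X, G'.Adj (f a) (f b) ↔ G.Adj a b) :
    crossInvCount G' (A.image f) (B.image f) = crossInvCount G A B := by
  rw [crossInvCount, crossInvCount, ← Finset.prodMap_image_product, Finset.filter_image,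
    Finset.card_image_of_injOn]
  · congr 1
    refine Finset.filter_congr fun p hp => ?_
    obtain ⟨ha, hb⟩ := Finset.mem_product.1 hp
    exact and_congr (hf.lt_iff_lt (hB hb) (hA ha)) (hadj _ (hA ha) _ (hB hb))
  · rintro ⟨a, b⟩ hp ⟨a', b'⟩ hp' h
    simp only [Finset.coe_filter, Finset.mem_product, Set.mem_ofPred_eq] at hp hp'
    obtain ⟨h₁, h₂⟩ := Prod.ext_iff.1 h
    exact Prod.ext (hf.injOn (hA hp.1.1) (hA hp'.1.1) h₁) (hf.injOn (hB hp.1.2) (hB hp'.1.2) h₂)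

theorem invCount_relabelG_sigmaList (H : FinGraph) {u : Finset ℕ} (hu : u ⊆ H.verts) :
    invCount (relabelG H) (sigmaList (relabelG H).verts (relabelF H.verts u)) =
      invCount H (sigmaList H.verts u) := by
  rw [invCount_sigmaList, invCount_sigmaList, relabelF,
    show (relabelG H).verts = H.verts.image (rk H.verts) from rfl,
    ← Finset.image_sdiff_of_injOn (rk_strictMonoOn H.verts).injOn hu]
  exact crossInvCount_image (rk_strictMonoOn H.verts) hu Finset.sdiff_subset
    fun a ha b hb => relabelG_adj_rk_iff H ha hb

theorem FarApart.symm {G : FinGraph} {a b : Finset ℕ} (h : FarApart G a b) : FarApart G b a :=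
  ⟨h.1.symm, fun ⟨v, hv, w, hw, hvw⟩ => h.2 ⟨w, hw, v, hv, G.symm _ _ hvw⟩⟩

theorem crossInvCount_sdiff_of_farApart {G : FinGraph} {A C : Finset ℕ} (hfar : FarApart G A C)
    (B : Finset ℕ) : crossInvCount G A (B \ C) = crossInvCount G A B := by
  unfold crossInvCount
  congr 1
  ext ⟨a, b⟩
  simp only [Finset.mem_filter, Finset.mem_product, Finset.mem_sdiff]
  exact ⟨fun ⟨⟨ha, hb, _⟩, h⟩ => ⟨⟨ha, hb⟩, h⟩,
    fun ⟨⟨ha, hb⟩, h⟩ => ⟨⟨ha, hb, fun hbC => hfar.2 ⟨a, ha, b, hbC, h.2⟩⟩, h⟩⟩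

theorem reconn_verts (G : FinGraph) (t : Finset ℕ) : (reconn G t).verts = G.verts \ t := by
  simp [reconn, reconnAll]

theorem subset_reconn_verts_of_farApart {G : FinGraph} {t t' : Finset ℕ} (hfar : FarApart G t t')
    (ht' : t' ⊆ G.verts) : t' ⊆ (reconn G t).verts :=
  reconn_verts G t ▸ Finset.subset_sdiff.2 ⟨ht', hfar.1.symm⟩

theorem reconn_adj_iff_of_farApart {G : FinGraph} {t t' : Finset ℕ} (hfar : FarApart G t t')
    {a b : ℕ} (hat' : a ∈ t') (ha : a ∈ (reconn G t).verts) (hb : b ∈ (reconn G t).verts) :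
    (reconn G t).Adj a b ↔ G.Adj a b := by
  refine ⟨fun ⟨_, _, _, h⟩ => h.resolve_right ?_,
    fun h => ⟨fun hab => G.loopless a (hab ▸ h), ha, hb, Or.inl h⟩⟩
  rintro ⟨f, hf, ⟨u, hu, hau⟩, -⟩
  rw [Finset.mem_singleton.1 hf] at hu
  exact hfar.2 ⟨u, hu, a, hat', G.symm _ _ hau⟩

theorem invCount_sigmaList_of_farApart {G : FinGraph} {t t' : Finset ℕ}
    (hfar : FarApart G t t') :
    invCount G (sigmaList G.verts t) = crossInvCount G t ((G.verts \ t) \ t') := by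
  rw [invCount_sigmaList, crossInvCount_sdiff_of_farApart hfar]

theorem invCount_reconn_sigmaList_of_farApart {G : FinGraph} {t t' : Finset ℕ}
    (hfar : FarApart G t t') (ht' : t' ⊆ G.verts) :
    invCount (reconn G t) (sigmaList (reconn G t).verts t') =
      crossInvCount G t' ((G.verts \ t) \ t') := by
  rw [invCount_sigmaList, reconn_verts, crossInvCount, crossInvCount]
  congr 1
  refine Finset.filter_congr fun p hp => and_congr_right fun _ => ?_
  obtain ⟨ha, hb⟩ := Finset.mem_product.1 hp
  exact reconn_adj_iff_of_farApart hfar ha (subset_reconn_verts_of_farApart hfar ht' ha)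
    (reconn_verts G t ▸ Finset.sdiff_subset hb)

end CDTub

open CDTub in
theorem sgn_far_apart_general (G : FinGraph) (t t' : Finset ℕ) (ht : IsTube G t) (ht' : IsTube G t')
    (hfar : FarApart G t t') :
    graphSgn G (sigmaList G.verts t) *
      graphSgn (relabelG (reconn G t))
        (sigmaList (relabelG (reconn G t)).verts (relabelF (reconn G t).verts t')) =
    graphSgn G (sigmaList G.verts t') *
      graphSgn (relabelG (reconn G t'))
        (sigmaList (relabelG (reconn G t')).verts (relabelF (reconn G t').verts t)) := by
  simp only [graphSgn, ← pow_add,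
    invCount_relabelG_sigmaList _ (subset_reconn_verts_of_farApart hfar ht'.2.1),
    invCount_relabelG_sigmaList _ (subset_reconn_verts_of_farApart hfar.symm ht.2.1),
    invCount_sigmaList_of_farApart hfar, invCount_sigmaList_of_farApart hfar.symm,
    invCount_reconn_sigmaList_of_farApart hfar ht'.2.1,
    invCount_reconn_sigmaList_of_farApart hfar.symm ht.2.1]
  rw [add_comm, sdiff_sdiff_comm]

open CDTub in
/-- For disjoint, non-linked (far apart) tubes `t, t'` of a connected graph on
`{1,…,n}`: `sgn^Γ(σ_t)·sgn^{Γ_t^*}(σ_{t'}) = sgn^Γ(σ_{t'})·sgn^{Γ_{t'}^*}(σ_t)`,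
where the reconnected complements are relabelled order-preservingly. -/
theorem sgn_far_apart (G : FinGraph) (n : ℕ) (hV : G.verts = Finset.Icc 1 n)
    (hc : IsConnGraph G) (t t' : Finset ℕ) (ht : IsTube G t) (ht' : IsTube G t')
    (hfar : FarApart G t t') :
    graphSgn G (sigmaList G.verts t) *
      graphSgn (relabelG (reconn G t))
        (sigmaList (relabelG (reconn G t)).verts (relabelF (reconn G t).verts t')) =
    graphSgn G (sigmaList G.verts t') *
      graphSgn (relabelG (reconn G t'))
        (sigmaList (relabelG (reconn G t')).verts (relabelF (reconn G t').verts t)) :=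
  sgn_far_apart_general G t t' ht ht' hfar
end
end

section
/- A tubing of a finite connected simple graph Γ with n vertices contains at most n tubes. -/
open scoped Classical
open TensorProduct

noncomputable section

/-!
Every tube `t` of a tubing has a vertex lying in no smaller tube of the tubing. Otherwise `t`
is covered by the maximal tubes strictly inside it; these are pairwise compatible without being
nested, hence far apart, so no edge leaves any one of them within `t`, and connectivity of `t`
puts all of `t` into a single one of them. Distinct tubes get distinct such vertices (they are
nested or disjoint), which injects the tubing into the vertex set.
-/

namespace CDTub

open Finset

variable {G : FinGraph}

theorem VConn.subset_of_forall_adj_mem {s m : Finset ℕ} (hs : VConn G s) {v : ℕ}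
    (hvs : v ∈ s) (hvm : v ∈ m) (hm : ∀ a ∈ m, ∀ b ∈ s, G.Adj a b → b ∈ m) : s ⊆ m := by
  intro w hw
  have hvw := hs v hvs w hw
  clear hw
  induction hvw with
  | refl => exact hvm
  | tail _ hbc ih => exact hm _ ih _ hbc.2.1 hbc.2.2

theorem VConn.exists_mem_forall_ssubset_notMem {F : Finset (Finset ℕ)}
    (hF : (F : Set (Finset ℕ)).Pairwise (Compatible G)) {t : Finset ℕ} (hne : t.Nonempty)
    (ht : VConn G t) : ∃ v ∈ t, ∀ s ∈ F, s ⊂ t → v ∉ s := by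
  by_contra! hcover
  set P := F.filter (· ⊂ t)
  have hmax : ∀ v ∈ t, ∃ m, Maximal (· ∈ P) m ∧ v ∈ m := by
    intro v hv
    obtain ⟨s, hs, hst, hvs⟩ := hcover v hv
    obtain ⟨m, hsm, hm⟩ := P.finite_toSet.exists_le_maximal (mem_filter.2 ⟨hs, hst⟩)
    exact ⟨m, hm, hsm hvs⟩
  have heq_of_adj : ∀ m m', Maximal (· ∈ P) m → Maximal (· ∈ P) m' →
      ∀ a ∈ m, ∀ b ∈ m', G.Adj a b → m = m' := by
    intro m m' hm hm' a ha b hb hab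
    by_contra hmm'
    rcases hF (mem_filter.1 hm.1).1 (mem_filter.1 hm'.1).1 hmm' with h | h | h
    · exact hmm' (hm.eq_of_le hm'.1 h)
    · exact hmm' (hm'.eq_of_le hm.1 h).symm
    · exact h.2 ⟨a, ha, b, hb, hab⟩
  obtain ⟨v, hv⟩ := hne
  obtain ⟨m, hm, hvm⟩ := hmax v hv
  have htm : t ⊆ m := ht.subset_of_forall_adj_mem hv hvm fun a ha b hb hab => by
    obtain ⟨m', hm', hbm'⟩ := hmax b hb
    exact heq_of_adj m m' hm hm' a ha b hbm' hab ▸ hbm'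
  exact (mem_filter.1 hm.1).2.2 htm

theorem card_le_card_verts_of_pairwise_compatible {F : Finset (Finset ℕ)}
    (hF : (F : Set (Finset ℕ)).Pairwise (Compatible G)) (htube : ∀ t ∈ F, IsTube G t) :
    F.card ≤ G.verts.card := by
  choose! v hvt hvF using fun t ht =>
    (htube t ht).2.2.exists_mem_forall_ssubset_notMem hF (htube t ht).1
  refine card_le_card_of_injOn v (fun t ht => (htube t ht).2.1 (hvt t ht)) ?_
  intro t ht t' ht' hvv
  by_contra hne
  rcases hF ht ht' hne with h | h | h
  · exact hvF t' ht' t ht (Finset.ssubset_iff_subset_ne.2 ⟨h, hne⟩) (hvv ▸ hvt t ht)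
  · exact hvF t ht t' ht' (Finset.ssubset_iff_subset_ne.2 ⟨h, Ne.symm hne⟩) (hvv ▸ hvt t' ht')
  · exact disjoint_left.1 h.1 (hvt t ht) (hvv ▸ hvt t' ht')

end CDTub

open CDTub in
theorem tubing_card_le_general (G : FinGraph)
    (T : Finset (Finset ℕ)) (hT : IsTubing G T) :
    T.card ≤ G.verts.card :=
  card_le_card_verts_of_pairwise_compatible hT.2.2 hT.2.1

open CDTub in
/-- A tubing of a connected graph with `n` vertices contains at most `n` tubes. -/
theorem tubing_card_le (G : FinGraph) (hc : IsConnGraph G)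
    (T : Finset (Finset ℕ)) (hT : IsTubing G T) :
    T.card ≤ G.verts.card :=
  tubing_card_le_general G T hT
end
end

section
/- Let Γ be a finite connected simple graph with nonempty vertex set. No family of pairwise compatible proper tubes of Γ can cover the vertex set of Γ: if F is a set of proper tubes of Γ that are pairwise compatible, then the union of the tubes in F is a proper subset of the vertex set of Γ. -/
open scoped Classical
open TensorProduct

noncomputable section

namespace CDTub

variable {G : FinGraph}

theorem VConn.subset_of_adj_closed {s t : Finset ℕ} (hs : VConn G s) {v : ℕ} (hvs : v ∈ s)
    (hvt : v ∈ t) (hclosed : ∀ x ∈ t, ∀ y ∈ s, G.Adj x y → y ∈ t) : s ⊆ t := by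
  intro y hy
  induction hs v hvs y hy with
  | refl => exact hvt
  | tail _ hbc ih => exact hclosed _ (ih hbc.1) _ hbc.2.1 hbc.2.2

/-- The tube containing the other endpoint of the edge can be neither larger (maximality) nor
far apart (the edge), so it lies inside `m`. -/
theorem adj_closed_of_maximal_of_cover {F : Finset (Finset ℕ)}
    (hcomp : ∀ s ∈ F, ∀ s' ∈ F, s ≠ s' → Compatible G s s')
    (hcover : G.verts ⊆ F.biUnion id) {m : Finset ℕ} (hm : Maximal (· ∈ F) m) :
    ∀ x ∈ m, ∀ y ∈ G.verts, G.Adj x y → y ∈ m := by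
  intro x hx y hy hxy
  obtain ⟨s, hs, hys⟩ := Finset.mem_biUnion.mp (hcover hy)
  by_cases hsm : m = s
  · exact hsm ▸ hys
  rcases hcomp m hm.prop s hs hsm with hms | hsm_sub | ⟨-, hnoedge⟩
  · exact absurd (hm.eq_of_ge hs hms).symm hsm
  · exact hsm_sub hys
  · exact absurd ⟨x, hx, y, hys, hxy⟩ hnoedge

end CDTub

open CDTub in
/-- No family of pairwise compatible proper tubes of a connected graph covers the
vertex set. -/
theorem proper_tubes_no_cover (G : FinGraph) (hc : IsConnGraph G)
    (F : Finset (Finset ℕ)) (hF : ∀ s ∈ F, IsTube G s ∧ s ≠ G.verts)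
    (hcomp : ∀ s ∈ F, ∀ s' ∈ F, s ≠ s' → Compatible G s s') :
    F.biUnion id ⊂ G.verts := by
  have hsub : F.biUnion id ⊆ G.verts := Finset.biUnion_subset.2 fun s hs => (hF s hs).1.2.1
  refine Finset.ssubset_iff_subset_ne.2 ⟨hsub, fun hcover => ?_⟩
  obtain ⟨s, hs, -⟩ := Finset.biUnion_nonempty.1 (hcover ▸ hc.1)
  obtain ⟨m, hm⟩ := Finset.exists_maximal ⟨s, hs⟩
  obtain ⟨⟨v, hvm⟩, hmG, -⟩ := (hF m hm.prop).1
  have hGm : G.verts ⊆ m := hc.2.2.subset_of_adj_closed (hmG hvm) hvm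
    (adj_closed_of_maximal_of_cover hcomp hcover.symm.subset hm)
  exact (hF m hm.prop).2 (hmG.antisymm hGm)
end
end

section
/- The operations ▷ and ◁ on tubings of connected graphs form an L-algebra: for finite connected simple graphs Γ, Ω, Θ with tubings T, S, W respectively, the underlying connected graphs agree, Γ ∪_{T, S◁W} (Ω ∪_{S,W} Θ) = (Γ ∪_{T,S} Ω) ∪_{T▷S, W} Θ, and T ▷ (S ◁ W) = (T ▷ S) ◁ W as tubings of this graph. -/
/-!
Both graphs consist of `Γ`, `Ω` shifted by `n`, `Θ` shifted by `n + m`, and two joining edges;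
everything reduces to computing the free vertices of the inner joins. In `Ω ∪ Θ` the tube
`Θ + m` belongs to `S ◁ W`, so `X_{S ◁ W} = X_S`; in `Γ ∪ Ω` the tube `Γ` belongs to `T ▷ S`, so
`X_{T ▷ S} = X_S + n`. Hence both graphs carry the edges `max X_T — n + min X_S` and
`n + max X_S — n + m + min X_W`, and both tubings equal `T ∪ (S̄ + n) ∪ (W + n + m) ∪ {t_∪}`.
The endpoints exist because free vertex sets are nonempty: the edge by which a walk first leaves
a maximal proper tube ends at a vertex lying in no proper tube.
-/

open scoped Classical
open TensorProduct

noncomputable section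

namespace CDTub

open Finset

lemma shiftF_union (k : ℕ) (s t : Finset ℕ) : shiftF k (s ∪ t) = shiftF k s ∪ shiftF k t :=
  image_union _ _

lemma shiftF_shiftF (k l : ℕ) (s : Finset ℕ) : shiftF k (shiftF l s) = shiftF (k + l) s := by
  simp only [shiftF, image_image, Function.comp_def, add_assoc, add_comm l]

lemma shiftT_union (k : ℕ) (A B : Finset (Finset ℕ)) :
    shiftT k (A ∪ B) = shiftT k A ∪ shiftT k B :=
  image_union _ _

lemma shiftT_shiftT (k l : ℕ) (F : Finset (Finset ℕ)) :
    shiftT k (shiftT l F) = shiftT (k + l) F := by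
  simp only [shiftT, image_image, Function.comp_def, shiftF_shiftF]

lemma shiftF_sdiff (k : ℕ) (s t : Finset ℕ) : shiftF k (s \ t) = shiftF k s \ shiftF k t :=
  image_sdiff _ _ (add_left_injective k)

lemma shiftF_Icc (k a b : ℕ) : shiftF k (Icc a b) = Icc (a + k) (b + k) :=
  image_add_right_Icc a b k

lemma biUnion_shiftT (k : ℕ) (F : Finset (Finset ℕ)) :
    (shiftT k F).biUnion id = shiftF k (F.biUnion id) := by
  simp only [shiftT, shiftF, biUnion_image, image_biUnion, id]

lemma unbotD_max_shiftF (k : ℕ) {s : Finset ℕ} (hs : s.Nonempty) :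
    (shiftF k s).max.unbotD 0 = s.max.unbotD 0 + k := by
  have hks : (shiftF k s).Nonempty := hs.image _
  rw [← coe_max' hs, ← coe_max' hks, WithBot.unbotD_coe, WithBot.unbotD_coe]
  exact max'_image add_left_mono s hks

lemma disjoint_shiftF_of_eq_Icc {A B : Finset ℕ} {n m : ℕ} (hA : A = Icc 1 n)
    (hB : B = Icc 1 m) : Disjoint A (shiftF n B) := by
  rw [hA, hB, shiftF_Icc, disjoint_left]
  simp only [mem_Icc]
  omega

lemma joinVerts_eq_Icc {G Om : FinGraph} {n m : ℕ} (hG : G.verts = Icc 1 n)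
    (hOm : Om.verts = Icc 1 m) : joinVerts G Om n = Icc 1 (n + m) := by
  ext v
  simp only [joinVerts, hG, hOm, shiftF_Icc, mem_union, mem_Icc]
  omega

lemma ne_union_of_subset_left {α : Type*} [DecidableEq α] {s A B : Finset α} (hs : s ⊆ A)
    (hAB : Disjoint A B) (hB : B.Nonempty) : s ≠ A ∪ B := by
  rintro rfl
  exact hB.ne_empty (disjoint_self_iff_empty B |>.mp
    (hAB.mono_left (subset_union_right.trans hs)).symm)

lemma ne_union_of_subset_right {α : Type*} [DecidableEq α] {s A B : Finset α} (hs : s ⊆ B)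
    (hAB : Disjoint A B) (hA : A.Nonempty) : s ≠ A ∪ B := by
  rw [union_comm]
  exact ne_union_of_subset_left hs hAB.symm hA

lemma exists_step_out_of_reflTransGen {α : Type*} {R : α → α → Prop} {p : α → Prop} {u v : α}
    (h : Relation.ReflTransGen R u v) (hu : p u) (hv : ¬ p v) : ∃ a b, p a ∧ ¬ p b ∧ R a b := by
  induction h with
  | refl => exact absurd hu hv
  | @tail b c _ hbc ih =>
    by_cases hb : p b
    · exact ⟨b, c, hb, hv, hbc⟩
    · exact ih hb

section Tubing

variable {G : FinGraph} {T : Finset (Finset ℕ)}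

lemma IsTubing.subset_verts (hT : IsTubing G T) {t : Finset ℕ} (ht : t ∈ T) : t ⊆ G.verts :=
  (hT.2.1 t ht).2.1

lemma IsTubing.verts_nonempty (hT : IsTubing G T) : G.verts.Nonempty :=
  (hT.2.1 _ hT.1).1

lemma IsTubing.biUnion_eq_verts (hT : IsTubing G T) : T.biUnion id = G.verts :=
  (biUnion_subset.mpr fun _ => hT.subset_verts).antisymm (subset_biUnion_of_mem id hT.1)

lemma properTubes_union_verts {A : Finset (Finset ℕ)} (hA : ∀ s ∈ A, s ≠ G.verts) :
    properTubes G (A ∪ {G.verts}) = A := by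
  ext s
  simp only [properTubes, mem_filter, mem_union, mem_singleton]
  exact ⟨fun ⟨hs, hne⟩ => hs.resolve_right hne, fun hs => ⟨Or.inl hs, hA s hs⟩⟩

lemma freeVerts_eq_sdiff (G : FinGraph) (T : Finset (Finset ℕ)) :
    freeVerts G T = G.verts \ (properTubes G T).biUnion id := by
  ext v
  simp only [freeVerts, properTubes, mem_filter, mem_sdiff, mem_biUnion, id]
  aesop

lemma freeVerts_nonempty (hGc : IsConnGraph G) (hT : IsTubing G T) :
    (freeVerts G T).Nonempty := by
  rcases (properTubes G T).eq_empty_or_nonempty with hP | hP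
  · rw [freeVerts_eq_sdiff, hP, biUnion_empty, sdiff_empty]
    exact hGc.1
  obtain ⟨t, htP, htmax⟩ := exists_maximal hP
  obtain ⟨htT, htG⟩ := mem_filter.mp htP
  obtain ⟨u, hu⟩ := (hT.2.1 t htT).1
  obtain ⟨v, hvG, hvt⟩ := not_subset.mp fun h => htG ((hT.subset_verts htT).antisymm h)
  obtain ⟨a, b, hat, hbt, -, hbG, hab⟩ :=
    exists_step_out_of_reflTransGen (p := (· ∈ t))
      (hGc.2.2 u (hT.subset_verts htT hu) v hvG) hu hvt
  refine ⟨b, mem_filter.mpr ⟨hbG, fun s hsT hsG hbs => ?_⟩⟩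
  have hst : t ≠ s := fun h => hbt (h ▸ hbs)
  rcases hT.2.2 t htT s hsT hst with hts | hst' | ⟨-, hfar⟩
  · exact hbt (htmax (mem_filter.mpr ⟨hsT, hsG⟩) hts hbs)
  · exact hbt (hst' hbs)
  · exact hfar ⟨a, hat, b, hbs, hab⟩

end Tubing

section Join

variable {G Om Th : FinGraph} {T S W : Finset (Finset ℕ)} {n m : ℕ}

lemma properTubes_trR (hdisj : Disjoint G.verts (shiftF n Om.verts)) (hT : IsTubing G T)
    (hS : IsTubing Om S) :
    properTubes (joinG G Om T S n) (trR G Om T S n) = T ∪ shiftT n (properTubes Om S) := by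
  refine properTubes_union_verts fun s hs => ?_
  rcases mem_union.mp hs with hsT | hsS
  · exact ne_union_of_subset_left (hT.subset_verts hsT) hdisj (hS.verts_nonempty.image _)
  · obtain ⟨t, htS, rfl⟩ := mem_image.mp hsS
    exact ne_union_of_subset_right (image_subset_image (hS.subset_verts (mem_filter.mp htS).1))
      hdisj hT.verts_nonempty

lemma properTubes_trL (hdisj : Disjoint Om.verts (shiftF m Th.verts)) (hS : IsTubing Om S)
    (hW : IsTubing Th W) :
    properTubes (joinG Om Th S W m) (trL Om Th S W m) = properTubes Om S ∪ shiftT m W := by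
  refine properTubes_union_verts fun s hs => ?_
  rcases mem_union.mp hs with hsS | hsW
  · exact ne_union_of_subset_left (hS.subset_verts (mem_filter.mp hsS).1) hdisj
      (hW.verts_nonempty.image _)
  · obtain ⟨t, htW, rfl⟩ := mem_image.mp hsW
    exact ne_union_of_subset_right (image_subset_image (hW.subset_verts htW)) hdisj
      hS.verts_nonempty

lemma freeVerts_trR (hdisj : Disjoint G.verts (shiftF n Om.verts)) (hT : IsTubing G T)
    (hS : IsTubing Om S) :
    freeVerts (joinG G Om T S n) (trR G Om T S n) = shiftF n (freeVerts Om S) := by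
  rw [freeVerts_eq_sdiff, properTubes_trR hdisj hT hS, union_biUnion, biUnion_shiftT,
    hT.biUnion_eq_verts, freeVerts_eq_sdiff, shiftF_sdiff]
  ext v
  have : v ∈ G.verts → v ∉ shiftF n Om.verts := fun h => disjoint_left.mp hdisj h
  simp only [joinG, joinVerts, mem_sdiff, mem_union]
  tauto

lemma freeVerts_trL (hdisj : Disjoint Om.verts (shiftF m Th.verts)) (hS : IsTubing Om S)
    (hW : IsTubing Th W) :
    freeVerts (joinG Om Th S W m) (trL Om Th S W m) = freeVerts Om S := by
  rw [freeVerts_eq_sdiff, properTubes_trL hdisj hS hW, union_biUnion, biUnion_shiftT,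
    hW.biUnion_eq_verts, freeVerts_eq_sdiff]
  ext v
  have : v ∈ Om.verts → v ∉ shiftF m Th.verts := fun h => disjoint_left.mp hdisj h
  simp only [joinG, joinVerts, mem_sdiff, mem_union]
  tauto

lemma joinA_mem_verts (hGc : IsConnGraph G) (hT : IsTubing G T) : joinA G T ∈ G.verts := by
  have hX := freeVerts_nonempty hGc hT
  rw [joinA, ← coe_max' hX, WithBot.unbotD_coe]
  exact (mem_filter.mp (max'_mem _ hX)).1

lemma joinB_mem_shiftF_verts (hOmc : IsConnGraph Om) (hS : IsTubing Om S) (n : ℕ) :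
    joinB Om S n ∈ shiftF n Om.verts := by
  have hX := freeVerts_nonempty hOmc hS
  rw [joinB, ← coe_min' hX, WithTop.untopD_coe, add_comm]
  exact mem_image_of_mem _ (mem_filter.mp (min'_mem _ hX)).1

lemma joinB_add (Om : FinGraph) (S : Finset (Finset ℕ)) (n m : ℕ) :
    joinB Om S (n + m) = joinB Om S m + n := by
  simp only [joinB]
  omega

lemma joinA_trR (hdisj : Disjoint G.verts (shiftF n Om.verts)) (hT : IsTubing G T)
    (hOmc : IsConnGraph Om) (hS : IsTubing Om S) :
    joinA (joinG G Om T S n) (trR G Om T S n) = joinA Om S + n := by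
  rw [joinA, freeVerts_trR hdisj hT hS, unbotD_max_shiftF n (freeVerts_nonempty hOmc hS), joinA]

lemma joinB_trL (hdisj : Disjoint Om.verts (shiftF m Th.verts)) (hS : IsTubing Om S)
    (hW : IsTubing Th W) (k : ℕ) :
    joinB (joinG Om Th S W m) (trL Om Th S W m) k = joinB Om S k := by
  simp only [joinB, freeVerts_trL hdisj hS hW]

lemma joinG_adj_iff (hdisj : Disjoint G.verts (shiftF n Om.verts)) (ha : joinA G T ∈ G.verts)
    (hb : joinB Om S n ∈ shiftF n Om.verts) {v w : ℕ} :
    (joinG G Om T S n).Adj v w ↔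
      G.Adj v w ∨ (shiftG n Om).Adj v w ∨ s(v, w) = s(joinA G T, joinB Om S n) := by
  have hab : joinA G T ≠ joinB Om S n := fun h => disjoint_left.mp hdisj ha (h ▸ hb)
  refine or_congr_right (or_congr_right ?_)
  rw [Sym2.eq_iff]
  constructor
  · rintro ⟨-, -, -, h | ⟨rfl, rfl⟩⟩
    · exact Or.inl h
    · exact Or.inr ⟨rfl, rfl⟩
  · rintro (⟨rfl, rfl⟩ | ⟨rfl, rfl⟩)
    · exact ⟨hab, mem_union_left _ ha, mem_union_right _ hb, Or.inl ⟨rfl, rfl⟩⟩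
    · exact ⟨hab.symm, mem_union_right _ hb, mem_union_left _ ha, Or.inr ⟨rfl, rfl⟩⟩

lemma shiftG_joinG_adj_iff (hdisj : Disjoint G.verts (shiftF n Om.verts))
    (ha : joinA G T ∈ G.verts) (hb : joinB Om S n ∈ shiftF n Om.verts) {k v w : ℕ} :
    (shiftG k (joinG G Om T S n)).Adj v w ↔ (shiftG k G).Adj v w ∨
      (shiftG (k + n) Om).Adj v w ∨ s(v, w) = s(joinA G T + k, joinB Om S n + k) := by
  constructor
  · rintro ⟨a, b, hab, rfl, rfl⟩
    rcases (joinG_adj_iff hdisj ha hb).mp hab with h | ⟨c, d, h, rfl, rfl⟩ | h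
    · exact Or.inl ⟨a, b, h, rfl, rfl⟩
    · exact Or.inr (Or.inl ⟨c, d, h, by omega, by omega⟩)
    · simpa only [Sym2.map_mk] using Or.inr (Or.inr (congrArg (Sym2.map (· + k)) h))
  · rintro (⟨a, b, h, rfl, rfl⟩ | ⟨c, d, h, rfl, rfl⟩ | h)
    · exact ⟨a, b, (joinG_adj_iff hdisj ha hb).mpr (Or.inl h), rfl, rfl⟩
    · exact ⟨c + n, d + n, (joinG_adj_iff hdisj ha hb).mpr (Or.inr (Or.inl ⟨c, d, h, rfl, rfl⟩)),
        by omega, by omega⟩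
    · rcases Sym2.eq_iff.mp h with ⟨rfl, rfl⟩ | ⟨rfl, rfl⟩
      · exact ⟨_, _, (joinG_adj_iff hdisj ha hb).mpr (Or.inr (Or.inr rfl)), rfl, rfl⟩
      · exact ⟨_, _, (joinG_adj_iff hdisj ha hb).mpr (Or.inr (Or.inr Sym2.eq_swap)), rfl, rfl⟩

end Join

section Assoc

variable {G Om Th : FinGraph} {T S W : Finset (Finset ℕ)} {n m p : ℕ}

lemma joinVerts_assoc (hG : G.verts = Icc 1 n) (hOm : Om.verts = Icc 1 m)
    (hTh : Th.verts = Icc 1 p) :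
    joinVerts G (joinG Om Th S W m) n = joinVerts (joinG G Om T S n) Th (n + m) := by
  rw [joinVerts_eq_Icc hG (joinVerts_eq_Icc hOm hTh),
    joinVerts_eq_Icc (joinVerts_eq_Icc hG hOm) hTh, add_assoc]

lemma joinG_assoc_adj_iff (hG : G.verts = Icc 1 n) (hOm : Om.verts = Icc 1 m)
    (hTh : Th.verts = Icc 1 p) (hGc : IsConnGraph G) (hOmc : IsConnGraph Om)
    (hThc : IsConnGraph Th) (hT : IsTubing G T) (hS : IsTubing Om S) (hW : IsTubing Th W)
    (v w : ℕ) :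
    (joinG G (joinG Om Th S W m) T (trL Om Th S W m) n).Adj v w ↔
      (joinG (joinG G Om T S n) Th (trR G Om T S n) W (n + m)).Adj v w := by
  have hGOm := disjoint_shiftF_of_eq_Icc hG hOm
  have hOmTh := disjoint_shiftF_of_eq_Icc hOm hTh
  have hA := joinA_mem_verts hGc hT
  have hB := joinB_mem_shiftF_verts hOmc hS n
  have hB₁ : joinB (joinG Om Th S W m) (trL Om Th S W m) n ∈
      shiftF n (joinG Om Th S W m).verts := by
    rw [joinB_trL hOmTh hS hW]
    exact image_subset_image subset_union_left hB
  have hA₂ : joinA (joinG G Om T S n) (trR G Om T S n) ∈ (joinG G Om T S n).verts := by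
    rw [joinA_trR hGOm hT hOmc hS]
    exact mem_union_right _ (mem_image_of_mem _ (joinA_mem_verts hOmc hS))
  rw [joinG_adj_iff (disjoint_shiftF_of_eq_Icc hG (joinVerts_eq_Icc hOm hTh)) hA hB₁,
    joinG_adj_iff (disjoint_shiftF_of_eq_Icc (joinVerts_eq_Icc hG hOm) hTh) hA₂
      (joinB_mem_shiftF_verts hThc hW _),
    joinB_trL hOmTh hS hW, joinA_trR hGOm hT hOmc hS, joinB_add,
    shiftG_joinG_adj_iff hOmTh (joinA_mem_verts hOmc hS) (joinB_mem_shiftF_verts hThc hW m),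
    joinG_adj_iff hGOm hA hB]
  tauto

lemma trR_trL_assoc (hG : G.verts = Icc 1 n) (hOm : Om.verts = Icc 1 m)
    (hTh : Th.verts = Icc 1 p) (hT : IsTubing G T) (hS : IsTubing Om S) (hW : IsTubing Th W) :
    trR G (joinG Om Th S W m) T (trL Om Th S W m) n =
      trL (joinG G Om T S n) Th (trR G Om T S n) W (n + m) := by
  rw [trR.eq_def G, trL.eq_def (joinG G Om T S n),
    properTubes_trL (disjoint_shiftF_of_eq_Icc hOm hTh) hS hW,
    properTubes_trR (disjoint_shiftF_of_eq_Icc hG hOm) hT hS, shiftT_union, shiftT_shiftT,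
    joinVerts_assoc hG hOm hTh, ← union_assoc T]

end Assoc

end CDTub

open CDTub in
/-- L-algebra identity for `▷` and `◁`: the two joined graphs coincide and
`T ▷ (S ◁ W) = (T ▷ S) ◁ W`. -/
theorem L_algebra_identity (G Om Th : FinGraph) (n m p : ℕ)
    (hG : G.verts = Finset.Icc 1 n) (hOm : Om.verts = Finset.Icc 1 m)
    (hTh : Th.verts = Finset.Icc 1 p)
    (hGc : IsConnGraph G) (hOmc : IsConnGraph Om) (hThc : IsConnGraph Th)
    (T S W : Finset (Finset ℕ))
    (hT : IsTubing G T) (hS : IsTubing Om S) (hW : IsTubing Th W) :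
    GEq (joinG G (joinG Om Th S W m) T (trL Om Th S W m) n)
        (joinG (joinG G Om T S n) Th (trR G Om T S n) W (n + m)) ∧
    trR G (joinG Om Th S W m) T (trL Om Th S W m) n =
      trL (joinG G Om T S n) Th (trR G Om T S n) W (n + m) :=
  ⟨⟨joinVerts_assoc hG hOm hTh, joinG_assoc_adj_iff hG hOm hTh hGc hOmc hThc hT hS hW⟩,
    trR_trL_assoc hG hOm hTh hT hS hW⟩
end
end

section
/- Let Γ and Ω be two finite simple connected graphs with the same vertex set such that every edge of Ω is an edge of Γ. Let T be a tubing of Γ and S a tubing of Γ_T^*, and set T̂ := res_Ω^Γ(T). Then: (1) the graphs Γ_T^* and Ω_{T̂}^* have the same vertex set, and every edge of Ω_{T̂}^* is an edge of Γ_T^*; and (2) res_Ω^Γ(T •_Γ S) = T̂ •_Ω Ŝ, where Ŝ := res_{Ω_{T̂}^*}^{Γ_T^*}(S). -/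
open scoped Classical
open TensorProduct

noncomputable section

/-!
The `Ω`-components of the maximal tubes of `T` are exactly the maximal tubes of `T̂`, so
`Γ_T^*` and `Ω_{T̂}^*` have the same vertices, and an edge of `Ω_{T̂}^*` through a maximal tube
of `T̂` is an edge of `Γ_T^*` through the maximal tube of `T` containing it.

For a tube `s` of `Γ_T^*`, a path in `s̃` can leave `s` only into a maximal tube of `T` linked
to `s`, and since distinct maximal tubes are far apart it stays in one `Ω`-component of it until
it returns to `s`. Hence each `Ω`-component of `s̃` is either `c̃` for an `Ω_{T̂}^*`-component `c`
of `s`, or an `Ω`-component of a maximal tube of `T`, which already lies in `T̂`.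
-/

namespace CDTub

section Components

variable {G : FinGraph} {s t c u : Finset ℕ} {v w : ℕ}

abbrev AdjIn (G : FinGraph) (s : Finset ℕ) (a b : ℕ) : Prop := a ∈ s ∧ b ∈ s ∧ G.Adj a b

abbrev ReachIn (G : FinGraph) (s : Finset ℕ) : ℕ → ℕ → Prop :=
  Relation.ReflTransGen (AdjIn G s)

def component (G : FinGraph) (s : Finset ℕ) (v : ℕ) : Finset ℕ :=
  s.filter (ReachIn G s v)

theorem ReachIn.symm (h : ReachIn G s v w) : ReachIn G s w v :=
  Relation.ReflTransGen.mono (fun _ _ h => ⟨h.2.1, h.1, G.symm _ _ h.2.2⟩) _ _ h.swap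

theorem ReachIn.mono_set (hst : s ⊆ t) (h : ReachIn G s v w) : ReachIn G t v w :=
  Relation.ReflTransGen.mono (fun _ _ h => ⟨hst h.1, hst h.2.1, h.2.2⟩) _ _ h

theorem mem_component : w ∈ component G s v ↔ w ∈ s ∧ ReachIn G s v w :=
  Finset.mem_filter

theorem component_subset : component G s v ⊆ s :=
  Finset.filter_subset _ _

theorem mem_component_self (hv : v ∈ s) : v ∈ component G s v :=
  mem_component.2 ⟨hv, .refl⟩

theorem ReachIn.reachIn_component (h : ReachIn G s v w) :
    ReachIn G (component G s v) v w := by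
  induction h with
  | refl => exact .refl
  | tail hvx hxw ih =>
    exact ih.tail ⟨mem_component.2 ⟨hxw.1, hvx⟩, mem_component.2 ⟨hxw.2.1, hvx.tail hxw⟩,
      hxw.2.2⟩

theorem mem_comps : c ∈ comps G s ↔ ∃ v ∈ s, component G s v = c :=
  Finset.mem_image

theorem component_mem_comps (hv : v ∈ s) : component G s v ∈ comps G s :=
  mem_comps.2 ⟨v, hv, rfl⟩

theorem subset_of_mem_comps (hc : c ∈ comps G s) : c ⊆ s := by
  obtain ⟨v, -, rfl⟩ := mem_comps.1 hc
  exact component_subset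

theorem nonempty_of_mem_comps (hc : c ∈ comps G s) : c.Nonempty := by
  obtain ⟨v, hv, rfl⟩ := mem_comps.1 hc
  exact ⟨v, mem_component_self hv⟩

theorem component_eq_of_mem (hc : c ∈ comps G s) (hw : w ∈ c) : component G s w = c := by
  obtain ⟨v, -, rfl⟩ := mem_comps.1 hc
  have hvw := (mem_component.1 hw).2
  ext x
  simp only [mem_component]
  exact and_congr_right fun _ => ⟨hvw.trans, hvw.symm.trans⟩

theorem eq_of_mem_comps (hc : c ∈ comps G s) (hu : u ∈ comps G s) (hwc : w ∈ c)
    (hwu : w ∈ u) : c = u :=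
  (component_eq_of_mem hc hwc).symm.trans (component_eq_of_mem hu hwu)

theorem mem_comps_of_adj (hc : c ∈ comps G s) (hv : v ∈ c) (hw : w ∈ s) (h : G.Adj v w) :
    w ∈ c := by
  obtain ⟨x, -, rfl⟩ := mem_comps.1 hc
  obtain ⟨hvs, hxv⟩ := mem_component.1 hv
  exact mem_component.2 ⟨hw, hxv.tail ⟨hvs, hw, h⟩⟩

theorem vConn_of_mem_comps (hc : c ∈ comps G s) : VConn G c := by
  obtain ⟨x, -, rfl⟩ := mem_comps.1 hc
  intro v hv w hw
  exact ((mem_component.1 hv).2.reachIn_component).symm.trans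
    ((mem_component.1 hw).2.reachIn_component)

theorem subset_component_of_vConn (hus : u ⊆ s) (hu : VConn G u) (hv : v ∈ u) :
    u ⊆ component G s v :=
  fun _ hw => mem_component.2 ⟨hus hw, ReachIn.mono_set hus (hu v hv _ hw)⟩

theorem comps_eq_of_vConn (hs : VConn G s) (hc : c ∈ comps G s) : c = s := by
  obtain ⟨v, hv, rfl⟩ := mem_comps.1 hc
  exact component_subset.antisymm (subset_component_of_vConn subset_rfl hs hv)

theorem mem_comps_of_vConn_of_closed (hcs : c ⊆ s) (hne : c.Nonempty) (hc : VConn G c)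
    (hclosed : ∀ v ∈ c, ∀ w ∈ s, G.Adj v w → w ∈ c) : c ∈ comps G s := by
  obtain ⟨v, hv⟩ := hne
  refine mem_comps.2 ⟨v, hcs hv, (subset_component_of_vConn hcs hc hv).antisymm' ?_⟩
  intro w hw
  induction (mem_component.1 hw).2 with
  | refl => exact hv
  | tail _ hxy ih => exact hclosed _ (ih (mem_component.2 ⟨hxy.1, ‹_›⟩)) _ hxy.2.1 hxy.2.2

end Components

section Tubings

variable {G : FinGraph} {T : Finset (Finset ℕ)} {s t m m' : Finset ℕ} {u v w x y : ℕ}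

theorem mem_properTubes : t ∈ properTubes G T ↔ t ∈ T ∧ t ≠ G.verts :=
  Finset.mem_filter

theorem mem_MaxtP :
    m ∈ MaxtP G T ↔ m ∈ properTubes G T ∧ ∀ t ∈ properTubes G T, m ⊆ t → m = t :=
  Finset.mem_filter

theorem MaxtP_subset : MaxtP G T ⊆ T :=
  fun _ hm => (mem_properTubes.1 (mem_MaxtP.1 hm).1).1

theorem exists_MaxtP_superset (ht : t ∈ properTubes G T) : ∃ m ∈ MaxtP G T, t ⊆ m := by
  obtain ⟨m, hm, hmax⟩ :=
    ((properTubes G T).filter (t ⊆ ·)).exists_maximal ⟨t, Finset.mem_filter.2 ⟨ht, subset_rfl⟩⟩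
  obtain ⟨hmT, htm⟩ := Finset.mem_filter.1 hm
  refine ⟨m, mem_MaxtP.2 ⟨hmT, fun t' ht' hmt' => ?_⟩, htm⟩
  exact hmt'.antisymm (hmax (Finset.mem_filter.2 ⟨ht', htm.trans hmt'⟩) hmt')

theorem farApart_of_mem_MaxtP (hT : IsTubing G T) (hm : m ∈ MaxtP G T)
    (hm' : m' ∈ MaxtP G T) (hne : m ≠ m') : FarApart G m m' := by
  obtain ⟨hmT, hmax⟩ := mem_MaxtP.1 hm
  obtain ⟨hmT', hmax'⟩ := mem_MaxtP.1 hm'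
  rcases hT.2.2 m (mem_properTubes.1 hmT).1 m' (mem_properTubes.1 hmT').1 hne with h | h | h
  · exact absurd (hmax m' hmT' h) hne
  · exact absurd (hmax' m hmT h).symm hne
  · exact h

theorem MaxtP_eq_of_mem (hT : IsTubing G T) (hm : m ∈ MaxtP G T) (hm' : m' ∈ MaxtP G T)
    (hx : x ∈ m) (hx' : x ∈ m') : m = m' := by
  by_contra hne
  exact Finset.disjoint_left.1 (farApart_of_mem_MaxtP hT hm hm' hne).1 hx hx'

theorem MaxtP_eq_of_adj (hT : IsTubing G T) (hm : m ∈ MaxtP G T) (hm' : m' ∈ MaxtP G T)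
    (hx : x ∈ m) (hy : y ∈ m') (h : G.Adj x y) : m = m' := by
  by_contra hne
  exact (farApart_of_mem_MaxtP hT hm hm' hne).2 ⟨x, hx, y, hy, h⟩

theorem disjoint_of_mem_MaxtP (hs : s ⊆ (gammaStar G T).verts) (hm : m ∈ MaxtP G T) :
    Disjoint m s :=
  Finset.disjoint_right.2 fun _ hx hxm =>
    (Finset.mem_sdiff.1 (hs hx)).2 (Finset.mem_biUnion.2 ⟨m, hm, hxm⟩)

theorem linked_of_adj (hs : s ⊆ (gammaStar G T).verts) (hm : m ∈ MaxtP G T) (hu : u ∈ m)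
    (hw : w ∈ s) (h : G.Adj u w) : Linked G m s :=
  ⟨disjoint_of_mem_MaxtP hs hm, u, hu, w, hw, h⟩

theorem mem_tildeT : x ∈ tildeT G T s ↔ x ∈ s ∨ ∃ m ∈ MaxtP G T, Linked G m s ∧ x ∈ m := by
  simp only [tildeT, Finset.mem_union, Finset.mem_biUnion, Finset.mem_filter, id, and_assoc]

theorem subset_tildeT : s ⊆ tildeT G T s :=
  fun _ hx => mem_tildeT.2 (.inl hx)

theorem subset_tildeT_of_linked (hm : m ∈ MaxtP G T) (hl : Linked G m s) :
    m ⊆ tildeT G T s :=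
  fun _ hx => mem_tildeT.2 (.inr ⟨m, hm, hl, hx⟩)

/-- An edge of `Γ_T^*` not in `Γ` is replaced by a path through a maximal tube. -/
theorem ReachIn.tildeT_of_gammaStar (hmax : ∀ m ∈ MaxtP G T, VConn G m)
    (hs : s ⊆ (gammaStar G T).verts) (h : ReachIn (gammaStar G T) s v w) :
    ReachIn G (tildeT G T s) v w := by
  induction h with
  | refl => exact .refl
  | tail _ hxy ih =>
    obtain ⟨hx, hy, -, -, -, hadj | ⟨m, hm, ⟨a, ham, hxa⟩, ⟨b, hbm, hyb⟩⟩⟩ := hxy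
    · exact ih.tail ⟨subset_tildeT hx, subset_tildeT hy, hadj⟩
    · have hmt := subset_tildeT_of_linked hm (linked_of_adj hs hm ham hx (G.symm _ _ hxa))
      have hab : ReachIn G (tildeT G T s) a b := ReachIn.mono_set hmt (hmax m hm a ham b hbm)
      exact ih.trans ((hab.head ⟨subset_tildeT hx, hmt ham, hxa⟩).tail
        ⟨hmt hbm, subset_tildeT hy, G.symm _ _ hyb⟩)

theorem vConn_tildeT (hmax : ∀ m ∈ MaxtP G T, VConn G m) (hs : s ⊆ (gammaStar G T).verts)
    (hconn : VConn (gammaStar G T) s) : VConn G (tildeT G T s) := by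
  have hreach : ∀ y ∈ tildeT G T s, ∃ x ∈ s, ReachIn G (tildeT G T s) x y := by
    intro y hy
    rcases mem_tildeT.1 hy with hys | ⟨m, hm, ⟨-, a, ham, x, hx, hax⟩, hym⟩
    · exact ⟨y, hys, .refl⟩
    · have hmt := subset_tildeT_of_linked hm (linked_of_adj hs hm ham hx hax)
      exact ⟨x, hx, (ReachIn.mono_set hmt (hmax m hm a ham y hym)).head
        ⟨subset_tildeT hx, hmt ham, G.symm _ _ hax⟩⟩
  intro y hy y' hy'
  obtain ⟨x, hx, hxy⟩ := hreach y hy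
  obtain ⟨x', hx', hxy'⟩ := hreach y' hy'
  exact hxy.symm.trans ((ReachIn.tildeT_of_gammaStar hmax hs (hconn x hx x' hx')).trans hxy')

end Tubings

section Restriction

variable {G Om : FinGraph} {T : Finset (Finset ℕ)} {c f m : Finset ℕ}

theorem mem_resT : c ∈ resT Om T ↔ ∃ t ∈ T, c ∈ comps Om t :=
  Finset.mem_biUnion

theorem exists_MaxtP_of_mem_properTubes_resT (hOmc : IsConnGraph Om)
    (hV : Om.verts = G.verts) (hf : f ∈ properTubes Om (resT Om T)) :
    ∃ m ∈ MaxtP G T, f ⊆ m ∧ f.Nonempty ∧ VConn Om f := by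
  obtain ⟨hfT, hfV⟩ := mem_properTubes.1 hf
  obtain ⟨t, htT, hft⟩ := mem_resT.1 hfT
  have htV : t ≠ G.verts := by
    rintro rfl
    exact hfV (hV ▸ comps_eq_of_vConn (hV ▸ hOmc.2.2) hft)
  obtain ⟨m, hm, htm⟩ := exists_MaxtP_superset (mem_properTubes.2 ⟨htT, htV⟩)
  exact ⟨m, hm, (subset_of_mem_comps hft).trans htm, nonempty_of_mem_comps hft,
    vConn_of_mem_comps hft⟩

theorem mem_properTubes_resT (hV : Om.verts = G.verts) (hT : IsTubing G T)
    (hm : m ∈ MaxtP G T) (hf : f ∈ comps Om m) : f ∈ properTubes Om (resT Om T) := by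
  obtain ⟨hmT, hmV⟩ := mem_properTubes.1 (mem_MaxtP.1 hm).1
  refine mem_properTubes.2 ⟨mem_resT.2 ⟨m, hmT, hf⟩, fun hfV => hmV ?_⟩
  exact (hT.2.1 m hmT).2.1.antisymm (hV ▸ hfV ▸ subset_of_mem_comps hf)

theorem mem_MaxtP_resT (hOmc : IsConnGraph Om) (hV : Om.verts = G.verts)
    (hT : IsTubing G T) : f ∈ MaxtP Om (resT Om T) ↔ ∃ m ∈ MaxtP G T, f ∈ comps Om m := by
  constructor
  · intro hf
    obtain ⟨hfP, hmax⟩ := mem_MaxtP.1 hf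
    obtain ⟨m, hm, hfm, ⟨v, hv⟩, hfconn⟩ := exists_MaxtP_of_mem_properTubes_resT hOmc hV hfP
    have hcomp := component_mem_comps (G := Om) (hfm hv)
    refine ⟨m, hm, ?_⟩
    rwa [hmax _ (mem_properTubes_resT hV hT hm hcomp) (subset_component_of_vConn hfm hfconn hv)]
  · rintro ⟨m, hm, hf⟩
    refine mem_MaxtP.2 ⟨mem_properTubes_resT hV hT hm hf, fun f' hf' hff' => ?_⟩
    obtain ⟨m', hm', hf'm', -, hf'conn⟩ := exists_MaxtP_of_mem_properTubes_resT hOmc hV hf'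
    obtain ⟨v, hv⟩ := nonempty_of_mem_comps hf
    obtain rfl := MaxtP_eq_of_mem hT hm hm' (subset_of_mem_comps hf hv) (hf'm' (hff' hv))
    refine hff'.antisymm ?_
    rw [← component_eq_of_mem hf hv]
    exact subset_component_of_vConn hf'm' hf'conn (hff' hv)

theorem biUnion_MaxtP_resT (hOmc : IsConnGraph Om) (hV : Om.verts = G.verts)
    (hT : IsTubing G T) : (MaxtP Om (resT Om T)).biUnion id = (MaxtP G T).biUnion id := by
  ext x
  simp only [Finset.mem_biUnion, id, mem_MaxtP_resT hOmc hV hT]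
  constructor
  · rintro ⟨f, ⟨m, hm, hf⟩, hx⟩
    exact ⟨m, hm, subset_of_mem_comps hf hx⟩
  · rintro ⟨m, hm, hx⟩
    exact ⟨_, ⟨m, hm, component_mem_comps hx⟩, mem_component_self hx⟩

theorem gammaStar_resT_verts (hOmc : IsConnGraph Om) (hV : Om.verts = G.verts)
    (hT : IsTubing G T) : (gammaStar Om (resT Om T)).verts = (gammaStar G T).verts := by
  simp only [gammaStar, reconnAll, hV, biUnion_MaxtP_resT hOmc hV hT]

theorem gammaStar_resT_adj (hOmc : IsConnGraph Om) (hV : Om.verts = G.verts)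
    (hE : ∀ v w, Om.Adj v w → G.Adj v w) (hT : IsTubing G T) {v w : ℕ}
    (h : (gammaStar Om (resT Om T)).Adj v w) : (gammaStar G T).Adj v w := by
  obtain ⟨hne, hv, hw, hadj⟩ := h
  have hverts := gammaStar_resT_verts hOmc hV hT
  refine ⟨hne, (hverts ▸ hv : v ∈ (gammaStar G T).verts),
    (hverts ▸ hw : w ∈ (gammaStar G T).verts), ?_⟩
  rcases hadj with hadj | ⟨f, hf, ⟨a, haf, hva⟩, ⟨b, hbf, hwb⟩⟩
  · exact .inl (hE _ _ hadj)
  · obtain ⟨m, hm, hfm⟩ := (mem_MaxtP_resT hOmc hV hT).1 hf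
    have hfm := subset_of_mem_comps hfm
    exact .inr ⟨m, hm, ⟨a, hfm haf, hE _ _ hva⟩, ⟨b, hfm hbf, hE _ _ hwb⟩⟩

end Restriction

section Substitution

variable {G Om : FinGraph} {T : Finset (Finset ℕ)} {s c c' f m : Finset ℕ} {b y : ℕ}

theorem tildeT_resT_subset (hOmc : IsConnGraph Om) (hV : Om.verts = G.verts)
    (hE : ∀ v w, Om.Adj v w → G.Adj v w) (hT : IsTubing G T)
    (hs : s ⊆ (gammaStar G T).verts) (hcs : c ⊆ s) :
    tildeT Om (resT Om T) c ⊆ tildeT G T s := by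
  intro x hx
  rcases mem_tildeT.1 hx with hxc | ⟨f, hf, ⟨-, a, haf, w, hwc, haw⟩, hxf⟩
  · exact subset_tildeT (hcs hxc)
  · obtain ⟨m, hm, hfm⟩ := (mem_MaxtP_resT hOmc hV hT).1 hf
    have hfm := subset_of_mem_comps hfm
    exact subset_tildeT_of_linked hm
      (linked_of_adj hs hm (hfm haf) (hcs hwc) (hE _ _ haw)) (hfm hxf)

theorem mem_comps_of_adj_tildeT (hE : ∀ v w, Om.Adj v w → G.Adj v w) (hT : IsTubing G T)
    (hm : m ∈ MaxtP G T) (hf : f ∈ comps Om m) (hb : b ∈ f) (hy : y ∈ tildeT G T s)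
    (hys : y ∉ s) (h : Om.Adj b y) : y ∈ f := by
  obtain ⟨m', hm', -, hym'⟩ := (mem_tildeT.1 hy).resolve_left hys
  obtain rfl := MaxtP_eq_of_adj hT hm hm' (subset_of_mem_comps hf hb) hym' (hE _ _ h)
  exact mem_comps_of_adj hf hb hym' h

/-- An `Ω`-edge from `c̃` into `s̃` is either an edge of `Ω_{T̂}^*` inside `s` (possibly through a
maximal tube of `T̂`), or it enters an `Ω`-component of a maximal tube of `T` adjacent to `c`. -/
theorem mem_tildeT_resT_of_adj (hOmc : IsConnGraph Om) (hV : Om.verts = G.verts)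
    (hE : ∀ v w, Om.Adj v w → G.Adj v w) (hT : IsTubing G T)
    (hs : s ⊆ (gammaStar G T).verts) (hc : c ∈ comps (gammaStar Om (resT Om T)) s)
    (hb : b ∈ tildeT Om (resT Om T) c) (hy : y ∈ tildeT G T s) (h : Om.Adj b y) :
    y ∈ tildeT Om (resT Om T) c := by
  have hs' : s ⊆ (gammaStar Om (resT Om T)).verts := gammaStar_resT_verts hOmc hV hT ▸ hs
  have hcs := subset_of_mem_comps hc
  by_cases hys : y ∈ s
  · rcases mem_tildeT.1 hb with hbc | ⟨f, hf, ⟨-, a, haf, w, hwc, haw⟩, hbf⟩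
    · refine subset_tildeT (mem_comps_of_adj hc hbc hys ?_)
      exact ⟨fun hby => Om.loopless y (hby ▸ h), hs' (hcs hbc), hs' hys, .inl h⟩
    · by_cases hwy : w = y
      · exact subset_tildeT (hwy ▸ hwc)
      refine subset_tildeT (mem_comps_of_adj hc hwc hys ?_)
      exact ⟨hwy, hs' (hcs hwc), hs' hys,
        .inr ⟨f, hf, ⟨a, haf, Om.symm _ _ haw⟩, ⟨b, hbf, Om.symm _ _ h⟩⟩⟩
  · obtain ⟨m, hm, -, hym⟩ := (mem_tildeT.1 hy).resolve_left hys
    rcases mem_tildeT.1 hb with hbc | ⟨f, hf, hlink, hbf⟩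
    · have hf := (mem_MaxtP_resT hOmc hV hT).2 ⟨m, hm, component_mem_comps hym⟩
      exact mem_tildeT.2 (.inr ⟨_, hf, linked_of_adj (hcs.trans hs') hf
        (mem_component_self hym) hbc (Om.symm _ _ h), mem_component_self hym⟩)
    · obtain ⟨m', hm', hfm'⟩ := (mem_MaxtP_resT hOmc hV hT).1 hf
      exact mem_tildeT.2
        (.inr ⟨f, hf, hlink, mem_comps_of_adj_tildeT hE hT hm' hfm' hbf hy hys h⟩)

theorem tildeT_resT_mem_comps (hOmc : IsConnGraph Om) (hV : Om.verts = G.verts)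
    (hE : ∀ v w, Om.Adj v w → G.Adj v w) (hT : IsTubing G T)
    (hs : s ⊆ (gammaStar G T).verts) (hc : c ∈ comps (gammaStar Om (resT Om T)) s) :
    tildeT Om (resT Om T) c ∈ comps Om (tildeT G T s) := by
  have hcs := subset_of_mem_comps hc
  have hmax : ∀ f ∈ MaxtP Om (resT Om T), VConn Om f := fun f hf =>
    have ⟨_, _, hfm⟩ := (mem_MaxtP_resT hOmc hV hT).1 hf
    vConn_of_mem_comps hfm
  have hc' : c ⊆ (gammaStar Om (resT Om T)).verts :=
    gammaStar_resT_verts hOmc hV hT ▸ hcs.trans hs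
  exact mem_comps_of_vConn_of_closed (tildeT_resT_subset hOmc hV hE hT hs hcs)
    ((nonempty_of_mem_comps hc).mono subset_tildeT)
    (vConn_tildeT hmax hc' (vConn_of_mem_comps hc))
    fun _ hb _ hy h => mem_tildeT_resT_of_adj hOmc hV hE hT hs hc hb hy h

/-- A component of `s̃` that meets `s`, or is `Ω`-adjacent to `s`, is some `c̃`; any other one
is closed under `Ω`-adjacency inside a maximal tube of `T`, hence a component of it. -/
theorem mem_comps_tildeT (hOmc : IsConnGraph Om) (hV : Om.verts = G.verts)
    (hE : ∀ v w, Om.Adj v w → G.Adj v w) (hT : IsTubing G T)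
    (hs : s ⊆ (gammaStar G T).verts) (hc' : c' ∈ comps Om (tildeT G T s)) :
    c' ∈ resT Om T ∨
      ∃ c ∈ comps (gammaStar Om (resT Om T)) s, tildeT Om (resT Om T) c = c' := by
  obtain ⟨x, hx⟩ := nonempty_of_mem_comps hc'
  have hxt := subset_of_mem_comps hc' hx
  have of_mem_tildeT : ∀ w ∈ s,
      x ∈ tildeT Om (resT Om T) (component (gammaStar Om (resT Om T)) s w) →
      ∃ c ∈ comps (gammaStar Om (resT Om T)) s, tildeT Om (resT Om T) c = c' :=
    fun w hw hxw => ⟨_, component_mem_comps hw, eq_of_mem_comps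
      (tildeT_resT_mem_comps hOmc hV hE hT hs (component_mem_comps hw)) hc' hxw hx⟩
  by_cases hxs : x ∈ s
  · exact .inr (of_mem_tildeT x hxs (subset_tildeT (mem_component_self hxs)))
  obtain ⟨m, hm, hlink, hxm⟩ := (mem_tildeT.1 hxt).resolve_left hxs
  have hfm : component Om m x ∈ comps Om m := component_mem_comps hxm
  have hf := (mem_MaxtP_resT hOmc hV hT).2 ⟨m, hm, hfm⟩
  by_cases hadj : ∃ b ∈ component Om m x, ∃ w ∈ s, Om.Adj b w
  · obtain ⟨b, hbf, w, hws, hbw⟩ := hadj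
    have hws' : component (gammaStar Om (resT Om T)) s w ⊆ (gammaStar Om (resT Om T)).verts :=
      component_subset.trans (gammaStar_resT_verts hOmc hV hT ▸ hs)
    exact .inr (of_mem_tildeT w hws (mem_tildeT.2 (.inr ⟨_, hf,
      linked_of_adj hws' hf hbf (mem_component_self hws) hbw, mem_component_self hxm⟩)))
  push Not at hadj
  have hft : component Om m x ∈ comps Om (tildeT G T s) :=
    mem_comps_of_vConn_of_closed
      ((subset_of_mem_comps hfm).trans (subset_tildeT_of_linked hm hlink))
      ⟨x, mem_component_self hxm⟩ (vConn_of_mem_comps hfm)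
      fun b hb y hy h => mem_comps_of_adj_tildeT hE hT hm hfm hb hy (hadj b hb y · h) h
  rw [← eq_of_mem_comps hft hc' (mem_component_self hxm) hx]
  exact .inl (mem_resT.2 ⟨m, MaxtP_subset hm, hfm⟩)

theorem union_comps_tildeT (hOmc : IsConnGraph Om) (hV : Om.verts = G.verts)
    (hE : ∀ v w, Om.Adj v w → G.Adj v w) (hT : IsTubing G T)
    (hs : s ⊆ (gammaStar G T).verts) :
    resT Om T ∪ comps Om (tildeT G T s) =
      resT Om T ∪ (comps (gammaStar Om (resT Om T)) s).image (tildeT Om (resT Om T)) := by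
  ext c'
  simp only [Finset.mem_union, Finset.mem_image]
  constructor
  · rintro (h | h)
    · exact .inl h
    · exact mem_comps_tildeT hOmc hV hE hT hs h
  · rintro (h | ⟨c, hc, rfl⟩)
    · exact .inl h
    · exact .inr (tildeT_resT_mem_comps hOmc hV hE hT hs hc)

end Substitution

end CDTub

open CDTub in
theorem res_subst_general (G Om : FinGraph) (hOmc : IsConnGraph Om)
    (hV : Om.verts = G.verts) (hE : ∀ v w, Om.Adj v w → G.Adj v w)
    (T : Finset (Finset ℕ)) (hT : IsTubing G T)
    (S : Finset (Finset ℕ)) (hS : IsTubing (gammaStar G T) S) :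
    ((gammaStar Om (resT Om T)).verts = (gammaStar G T).verts ∧
      ∀ v w, (gammaStar Om (resT Om T)).Adj v w → (gammaStar G T).Adj v w) ∧
    resT Om (substT G T S) =
      substT Om (resT Om T) (resT (gammaStar Om (resT Om T)) S) := by
  refine ⟨⟨gammaStar_resT_verts hOmc hV hT, fun _ _ => gammaStar_resT_adj hOmc hV hE hT⟩, ?_⟩
  have key (s) (hs : s ∈ S) := Finset.ext_iff.1
    (union_comps_tildeT hOmc hV hE hT (hS.2.1 s hs).2.1)
  ext c'
  simp only [substT, resT, Finset.union_biUnion, Finset.image_biUnion, Finset.biUnion_image,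
    Finset.mem_union, Finset.mem_biUnion] at key ⊢
  constructor
  · rintro (h | ⟨s, hs, h⟩)
    · exact .inl h
    · exact ((key s hs c').1 (.inr h)).imp_right fun h => ⟨s, hs, h⟩
  · rintro (h | ⟨s, hs, h⟩)
    · exact .inl h
    · exact ((key s hs c').2 (.inr h)).imp_right fun h => ⟨s, hs, h⟩

open CDTub in
/-- Restriction commutes with substitution: for `Ω ⊆ Γ` on the same vertex set,
`Γ_T^*` and `Ω_{T̂}^*` have the same vertices and `Edg(Ω_{T̂}^*) ⊆ Edg(Γ_T^*)`, and
`res_Ω^Γ(T •_Γ S) = T̂ •_Ω Ŝ`. -/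
theorem res_subst (G Om : FinGraph) (hGc : IsConnGraph G) (hOmc : IsConnGraph Om)
    (hV : Om.verts = G.verts) (hE : ∀ v w, Om.Adj v w → G.Adj v w)
    (T : Finset (Finset ℕ)) (hT : IsTubing G T)
    (S : Finset (Finset ℕ)) (hS : IsTubing (gammaStar G T) S) :
    ((gammaStar Om (resT Om T)).verts = (gammaStar G T).verts ∧
      ∀ v w, (gammaStar Om (resT Om T)).Adj v w → (gammaStar G T).Adj v w) ∧
    resT Om (substT G T S) =
      substT Om (resT Om T) (resT (gammaStar Om (resT Om T)) S) :=
  res_subst_general G Om hOmc hV hE T hT S hS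
end
end
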